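/- In the construction D above (k oriented copies of K_{2d+1}, one oriented K_{2d+3} with special vertex v0, and an arc from each vertex of each K_{2d+1} to v0), every bipartition V(D) = V1 ∪ V2 with v0 ∈ V1 satisfies e(V1,V2) ≤ k·d(d+1)/2 + (d+1)(d+2)/2. Therefore min{e(V1,V2), e(V2,V1)} ≤ (d/(2(2d+1)))·m + (d+1)²/(2d+1) for every bipartition, where m = k(d+1)(2d+1) + (d+1)(2d+3). -/

import Mathlib

/-!
With `v₀ ∈ V₁`, an arc from a small clique into `v₀` never goes from `V₁` to `V₂`, and no arc
leaves the big clique for a small one, so `e(V₁, V₂)` is the sum of the numbers of arcs leaving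
`V₁` inside each of the `k + 1` cliques. In a regular tournament of outdegree `r` and a vertex set
`X` with `|X| = n`, we have `2 e(X, X) = n(n - 1)` and `e(X, X) + e(X, Xᶜ) = nr`, hence
`2 e(X, Xᶜ) = r(r + 1) - (r - n)(r - n + 1) ≤ r(r + 1)`, as `(r - n)(r - n + 1) ≥ 0` for
integers. The bound on the minimum is the first bound applied to the side containing `v₀`,
rewritten in terms of `m`.
-/

open Finset

def arcs {V : Type*} [DecidableEq V] (A : V → V → Prop) [DecidableRel A]
    (X Y : Finset V) : ℕ :=
  ((X ×ˢ Y).filter (fun p => A p.1 p.2)).card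

def outdeg {V : Type*} [Fintype V] (A : V → V → Prop) [DecidableRel A] (v : V) : ℕ :=
  (Finset.univ.filter (fun w => A v w)).card

def indeg {V : Type*} [Fintype V] (A : V → V → Prop) [DecidableRel A] (v : V) : ℕ :=
  (Finset.univ.filter (fun w => A w v)).card

structure IsTournament {V : Type*} (A : V → V → Prop) : Prop where
  irrefl : ∀ u, ¬ A u u
  iff_not_swap : ∀ u v, u ≠ v → (A u v ↔ ¬ A v u)

section Arcs

variable {V : Type*} [DecidableEq V] (A : V → V → Prop) [DecidableRel A]

lemma arcs_eq_sum_sum (X Y : Finset V) :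
    arcs A X Y = ∑ x ∈ X, ∑ y ∈ Y, if A x y then 1 else 0 := by
  rw [arcs, card_filter, sum_product]

lemma arcs_eq_sum_card_filter (X Y : Finset V) :
    arcs A X Y = ∑ x ∈ X, #(Y.filter (A x ·)) := by
  simp only [arcs_eq_sum_sum, card_filter]

lemma arcs_eq_sum_univ [Fintype V] (X Y : Finset V) :
    arcs A X Y = ∑ x, ∑ y, if x ∈ X ∧ y ∈ Y ∧ A x y then 1 else 0 := by
  simp only [arcs_eq_sum_sum, ite_and, sum_ite_irrel, sum_ite_mem, univ_inter, sum_const_zero]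

lemma arcs_add_arcs_compl_right [Fintype V] (X Y : Finset V) :
    arcs A X Y + arcs A X Yᶜ = ∑ x ∈ X, outdeg A x := by
  simp only [arcs_eq_sum_card_filter, outdeg, ← sum_add_distrib]
  refine sum_congr rfl fun x _ => ?_
  rw [← card_union_of_disjoint (disjoint_filter_filter disjoint_compl_right), ← filter_union,
    union_compl]

variable {A}

lemma IsTournament.two_mul_arcs_self_add_card (hA : IsTournament A) (X : Finset V) :
    2 * arcs A X X + #X = #X * #X := by
  have hpair : ∀ u v, ((if A u v then 1 else 0) + if A v u then 1 else 0) =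
      if u ≠ v then 1 else 0 := by
    intro u v
    by_cases huv : u = v
    · subst huv; simp [hA.irrefl]
    · by_cases h : A u v
      · simp [huv, h, (hA.iff_not_swap u v huv).1 h]
      · simp [huv, h, (hA.iff_not_swap v u (Ne.symm huv)).2 h]
  have hoff : 2 * arcs A X X = #X.offDiag := by
    rw [two_mul]
    nth_rw 2 [arcs_eq_sum_sum]
    rw [sum_comm, arcs_eq_sum_sum, ← sum_add_distrib]
    simp only [← sum_add_distrib, hpair]
    rw [← sum_product' (f := fun x y => if x ≠ y then 1 else 0), ← card_filter]
    congr 1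
    ext
    simp [and_assoc]
  rw [hoff, offDiag_card]
  have := Nat.le_mul_self #X
  omega

lemma IsTournament.two_mul_arcs_compl_le [Fintype V] (hA : IsTournament A) {r : ℕ}
    (hout : ∀ u, outdeg A u = r) (X : Finset V) :
    2 * arcs A X Xᶜ ≤ r * (r + 1) := by
  have hsplit := arcs_add_arcs_compl_right A X X
  have hinside := hA.two_mul_arcs_self_add_card X
  simp only [hout, sum_const, smul_eq_mul] at hsplit
  have key : (0 : ℤ) ≤ ((r : ℤ) - #X) * ((r : ℤ) - #X + 1) := by
    rcases le_or_gt (#X) r with h | h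
    · exact mul_nonneg (by omega) (by omega)
    · exact mul_nonneg_of_nonpos_of_nonpos (by omega) (by omega)
  zify at hsplit hinside ⊢
  nlinarith

end Arcs

lemma arcs_sum_eq_add {α β : Type*} [DecidableEq α] [DecidableEq β]
    (A : α ⊕ β → α ⊕ β → Prop) [DecidableRel A] (X Y : Finset (α ⊕ β))
    (hlr : ∀ a ∈ X.toLeft, ∀ b ∈ Y.toRight, ¬ A (.inl a) (.inr b))
    (hrl : ∀ b ∈ X.toRight, ∀ a ∈ Y.toLeft, ¬ A (.inr b) (.inl a)) :
    arcs A X Y = arcs (fun a a' => A (.inl a) (.inl a')) X.toLeft Y.toLeft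
      + arcs (fun b b' => A (.inr b) (.inr b')) X.toRight Y.toRight := by
  have hlr' : ∑ a ∈ X.toLeft, ∑ b ∈ Y.toRight, (if A (.inl a) (.inr b) then 1 else 0) = 0 :=
    sum_eq_zero fun a ha => sum_eq_zero fun b hb => if_neg (hlr a ha b hb)
  have hrl' : ∑ b ∈ X.toRight, ∑ a ∈ Y.toLeft, (if A (.inr b) (.inl a) then 1 else 0) = 0 :=
    sum_eq_zero fun b hb => sum_eq_zero fun a ha => if_neg (hrl b hb a ha)
  simp only [arcs_eq_sum_sum, sum_sum_eq_sum_toLeft_add_sum_toRight, sum_add_distrib, hlr', hrl',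
    add_zero, zero_add]

lemma arcs_prod_eq_sum {ι α : Type*} [Fintype ι] [DecidableEq ι] [Fintype α] [DecidableEq α]
    (A : ι × α → ι × α → Prop) [DecidableRel A] (hA : ∀ i j a b, A (i, a) (j, b) → i = j)
    (X Y : Finset (ι × α)) :
    arcs A X Y = ∑ i, arcs (fun a b => A (i, a) (i, b))
      (univ.filter fun a => (i, a) ∈ X) (univ.filter fun a => (i, a) ∈ Y) := by
  simp only [arcs_eq_sum_univ, Fintype.sum_prod_type, mem_filter, mem_univ, true_and]
  refine sum_congr rfl fun i _ => sum_congr rfl fun a _ => sum_eq_single i ?_ (by simp)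
  exact fun j _ hji => sum_eq_zero fun b _ => if_neg fun h => hji (hA _ _ _ _ h.2.2).symm

lemma two_mul_arcs_compl_le_of_blocks {ι α β : Type*} [Fintype ι] [DecidableEq ι] [Fintype α]
    [DecidableEq α] [Fintype β] [DecidableEq β]
    (A : (ι × α) ⊕ β → (ι × α) ⊕ β → Prop) [DecidableRel A] {r s : ℕ} {v₀ : β}
    (hblock : ∀ i, IsTournament fun a b => A (.inl (i, a)) (.inl (i, b)))
    (hblock_out : ∀ i a, outdeg (fun a b => A (.inl (i, a)) (.inl (i, b))) a = r)
    (hblock_cross : ∀ i j a b, A (.inl (i, a)) (.inl (j, b)) → i = j)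
    (hhub : IsTournament fun u v => A (.inr u) (.inr v))
    (hhub_out : ∀ u, outdeg (fun u v => A (.inr u) (.inr v)) u = s)
    (hto : ∀ x w, A (.inl x) (.inr w) → w = v₀)
    (hfrom : ∀ w x, ¬ A (.inr w) (.inl x))
    (X : Finset ((ι × α) ⊕ β)) (hX : .inr v₀ ∈ X) :
    2 * arcs A X Xᶜ ≤ Fintype.card ι * (r * (r + 1)) + s * (s + 1) := by
  have hright : Xᶜ.toRight = X.toRightᶜ := by ext; simp
  have hslice : ∀ i, (univ.filter fun a => (i, a) ∈ Xᶜ.toLeft) =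
      (univ.filter fun a => (i, a) ∈ X.toLeft)ᶜ := fun i => by ext; simp
  rw [arcs_sum_eq_add A X Xᶜ
      (fun x _ w hw h => by rw [mem_toRight, mem_compl, hto x w h] at hw; exact hw hX)
      (fun w _ x _ => hfrom w x),
    arcs_prod_eq_sum _ hblock_cross, hright]
  simp only [hslice]
  calc 2 * (∑ i, arcs _ _ _ + arcs _ _ _)
      = ∑ i, 2 * arcs _ _ _ + 2 * arcs _ _ _ := by rw [mul_add, mul_sum]
    _ ≤ ∑ _i : ι, r * (r + 1) + s * (s + 1) :=
      add_le_add (sum_le_sum fun i _ => (hblock i).two_mul_arcs_compl_le (hblock_out i) _)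
        (hhub.two_mul_arcs_compl_le hhub_out _)
    _ = Fintype.card ι * (r * (r + 1)) + s * (s + 1) := by rw [sum_const, card_univ, smul_eq_mul]

theorem stmt18_general (d k : ℕ)
    (A : (Fin k × Fin (2 * d + 1)) ⊕ Fin (2 * d + 3) →
         (Fin k × Fin (2 * d + 1)) ⊕ Fin (2 * d + 3) → Prop)
    [DecidableRel A]
    (hsmall : ∀ j : Fin k, ∀ u v : Fin (2 * d + 1),
      (A (.inl (j, u)) (.inl (j, v)) → u ≠ v) ∧
      (u ≠ v → (A (.inl (j, u)) (.inl (j, v)) ↔ ¬ A (.inl (j, v)) (.inl (j, u)))))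
    (hsmalldeg : ∀ j : Fin k, ∀ u : Fin (2 * d + 1),
      (Finset.univ.filter (fun v => A (.inl (j, u)) (.inl (j, v)))).card = d ∧
      (Finset.univ.filter (fun v => A (.inl (j, v)) (.inl (j, u)))).card = d)
    (hcross : ∀ j j' : Fin k, ∀ u v : Fin (2 * d + 1), j ≠ j' →
      ¬ A (.inl (j, u)) (.inl (j', v)))
    (hbig : ∀ u v : Fin (2 * d + 3),
      (A (.inr u) (.inr v) → u ≠ v) ∧
      (u ≠ v → (A (.inr u) (.inr v) ↔ ¬ A (.inr v) (.inr u))))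
    (hbigdeg : ∀ u : Fin (2 * d + 3),
      (Finset.univ.filter (fun v => A (.inr u) (.inr v))).card = d + 1 ∧
      (Finset.univ.filter (fun v => A (.inr v) (.inr u))).card = d + 1)
    (hto : ∀ x : Fin k × Fin (2 * d + 1), ∀ w : Fin (2 * d + 3),
      (A (.inl x) (.inr w) ↔ w = 0))
    (hfrom : ∀ w : Fin (2 * d + 3), ∀ x : Fin k × Fin (2 * d + 1), ¬ A (.inr w) (.inl x))
    (m : ℕ) (hm : m = k * (d + 1) * (2 * d + 1) + (d + 1) * (2 * d + 3)) :
    (∀ V1 : Finset ((Fin k × Fin (2 * d + 1)) ⊕ Fin (2 * d + 3)),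
      Sum.inr 0 ∈ V1 →
        (arcs A V1 V1ᶜ : ℚ) ≤ (k : ℚ) * (d * (d + 1)) / 2 + (d + 1) * (d + 2) / 2) ∧
    (∀ V1 : Finset ((Fin k × Fin (2 * d + 1)) ⊕ Fin (2 * d + 3)),
      min (arcs A V1 V1ᶜ : ℚ) (arcs A V1ᶜ V1 : ℚ)
        ≤ ((d : ℚ) / (2 * (2 * d + 1))) * m + (d + 1) ^ 2 / (2 * d + 1)) := by
  have hcut : ∀ V1, Sum.inr 0 ∈ V1 →
      (arcs A V1 V1ᶜ : ℚ) ≤ (k : ℚ) * (d * (d + 1)) / 2 + (d + 1) * (d + 2) / 2 := by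
    intro V1 hV1
    have := two_mul_arcs_compl_le_of_blocks A
      (fun j => ⟨fun u h => (hsmall j u u).1 h rfl, fun u v => (hsmall j u v).2⟩)
      (fun j u => (hsmalldeg j u).1)
      (fun j j' u v h => by_contra fun hne => hcross j j' u v hne h)
      ⟨fun u h => (hbig u u).1 h rfl, fun u v => (hbig u v).2⟩ (fun u => (hbigdeg u).1)
      (fun x w => (hto x w).1) hfrom V1 hV1
    rw [Fintype.card_fin] at this
    qify at this
    linarith
  have hbound : (k : ℚ) * (d * (d + 1)) / 2 + (d + 1) * (d + 2) / 2 =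
      ((d : ℚ) / (2 * (2 * d + 1))) * m + (d + 1) ^ 2 / (2 * d + 1) := by
    subst hm
    push_cast
    field_simp
    ring
  refine ⟨hcut, fun V1 => hbound ▸ ?_⟩
  by_cases hV1 : Sum.inr 0 ∈ V1
  · exact (min_le_left _ _).trans (hcut V1 hV1)
  · exact (min_le_right _ _).trans (by simpa using hcut V1ᶜ (mem_compl.2 hV1))

/-- In the Lee–Loh–Sudakov construction, every bipartition `V1 ∪ V2` with `v0 ∈ V1`
satisfies `e(V1,V2) ≤ k·d(d+1)/2 + (d+1)(d+2)/2`; consequently every bipartition satisfies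
`min{e(V1,V2), e(V2,V1)} ≤ (d/(2(2d+1)))·m + (d+1)²/(2d+1)`,
where `m = k(d+1)(2d+1) + (d+1)(2d+3)`. -/
theorem stmt18 (d k : ℕ) (hd : 1 ≤ d) (hk : 1 ≤ k)
    (A : (Fin k × Fin (2 * d + 1)) ⊕ Fin (2 * d + 3) →
         (Fin k × Fin (2 * d + 1)) ⊕ Fin (2 * d + 3) → Prop)
    [DecidableRel A]
    (hsmall : ∀ j : Fin k, ∀ u v : Fin (2 * d + 1),
      (A (.inl (j, u)) (.inl (j, v)) → u ≠ v) ∧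
      (u ≠ v → (A (.inl (j, u)) (.inl (j, v)) ↔ ¬ A (.inl (j, v)) (.inl (j, u)))))
    (hsmalldeg : ∀ j : Fin k, ∀ u : Fin (2 * d + 1),
      (Finset.univ.filter (fun v => A (.inl (j, u)) (.inl (j, v)))).card = d ∧
      (Finset.univ.filter (fun v => A (.inl (j, v)) (.inl (j, u)))).card = d)
    (hcross : ∀ j j' : Fin k, ∀ u v : Fin (2 * d + 1), j ≠ j' →
      ¬ A (.inl (j, u)) (.inl (j', v)))
    (hbig : ∀ u v : Fin (2 * d + 3),
      (A (.inr u) (.inr v) → u ≠ v) ∧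
      (u ≠ v → (A (.inr u) (.inr v) ↔ ¬ A (.inr v) (.inr u))))
    (hbigdeg : ∀ u : Fin (2 * d + 3),
      (Finset.univ.filter (fun v => A (.inr u) (.inr v))).card = d + 1 ∧
      (Finset.univ.filter (fun v => A (.inr v) (.inr u))).card = d + 1)
    (hto : ∀ x : Fin k × Fin (2 * d + 1), ∀ w : Fin (2 * d + 3),
      (A (.inl x) (.inr w) ↔ w = 0))
    (hfrom : ∀ w : Fin (2 * d + 3), ∀ x : Fin k × Fin (2 * d + 1), ¬ A (.inr w) (.inl x))
    (m : ℕ) (hm : m = k * (d + 1) * (2 * d + 1) + (d + 1) * (2 * d + 3)) :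
    (∀ V1 : Finset ((Fin k × Fin (2 * d + 1)) ⊕ Fin (2 * d + 3)),
      Sum.inr 0 ∈ V1 →
        (arcs A V1 V1ᶜ : ℚ) ≤ (k : ℚ) * (d * (d + 1)) / 2 + (d + 1) * (d + 2) / 2) ∧
    (∀ V1 : Finset ((Fin k × Fin (2 * d + 1)) ⊕ Fin (2 * d + 3)),
      min (arcs A V1 V1ᶜ : ℚ) (arcs A V1ᶜ V1 : ℚ)
        ≤ ((d : ℚ) / (2 * (2 * d + 1))) * m + (d + 1) ^ 2 / (2 * d + 1)) :=
  stmt18_general d k A hsmall hsmalldeg hcross hbig hbigdeg hto hfrom m hm
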